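/- Define Ψ_F(x) = -ψ(1-x) - ψ(1+x) + ψ(1/2-x/2) + ψ(1/2+x/2) and F(x) = (Γ(1/2+x/2)/Γ(1/2-x/2))^2 · Γ(1-x)/Γ(1+x). Then F''(x) = F(x)·(Ψ_F(x)^2 + Ψ_F'(x)), and F''(x) > 0 for all x ∈ [0, 2/38] (in fact F'' ≥ 6.4 on this interval). -/

import Mathlib

noncomputable def digamma (x : ℝ) : ℝ := deriv (fun y => Real.log (Real.Gamma y)) x

noncomputable def PsiF (x : ℝ) : ℝ :=
  -digamma (1 - x) - digamma (1 + x) + digamma (1 / 2 - x / 2) + digamma (1 / 2 + x / 2)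

noncomputable def F (v : ℝ) : ℝ :=
  (Real.Gamma (1 / 2 + v / 2) / Real.Gamma (1 / 2 - v / 2)) ^ 2 *
    (Real.Gamma (1 - v) / Real.Gamma (1 + v))

/-!
Near `0` every Γ-value in `F` is positive, so `F = exp (log F)` with `(log F)' = Ψ_F`; hence
`F' = F Ψ_F` and `F'' = F (Ψ_F² + Ψ_F')`.

For the bounds, `ψ(y + n) = ψ(y) + ∑_{k<n} 1/(y+k)` and the monotonicity of `ψ` (log-convexity
of Γ) give `ψ(y) + γ = ∑ (1/(1+k) - 1/(y+k))`; differentiating termwise, `ψ'(y) = ∑ 1/(y+k)²`.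
With `a_k = (1-t+k)⁻² - (1+t+k)⁻²` we get `ψ'(1-t) - ψ'(1+t) = ∑ a_k`, while, as
`1/2 ± t/2 + k = (1 ± t + 2k)/2`, the half-argument part of `Ψ_F'` is `-2 ∑ a_{2k}`. Hence
`Ψ_F'(t) = -∑ (-1)^k a_k` is an alternating series with decreasing terms and `-a_0 ≤ Ψ_F' ≤ 0`.
On `[0, 1/19]` this yields `Ψ_F ≤ Ψ_F(0) = -4 log 2`, `Ψ_F' ≥ -0.22` and
`F ≥ exp (-2.8/19) > 0.86`, whence `F'' ≥ 0.86 · 7.45 > 6.4`.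
-/

open Real Filter Topology Set Finset

local notation "γ" => Real.eulerMascheroniConstant

section Digamma

variable {y : ℝ}

lemma hasDerivAt_log_Gamma (hy : 0 < y) :
    HasDerivAt (fun y => log (Gamma y)) (digamma y) y :=
  ((differentiableAt_Gamma fun m => by linarith [(Nat.cast_nonneg m : (0 : ℝ) ≤ m)]).log
    (Gamma_pos_of_pos hy).ne').hasDerivAt

lemma digamma_add_one (hy : 0 < y) : digamma (y + 1) = digamma y + 1 / y := by
  have hshift : HasDerivAt (fun z => log (Gamma (z + 1))) (digamma (y + 1)) y :=
    (hasDerivAt_log_Gamma (by linarith)).comp_add_const y 1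
  have hsplit : HasDerivAt (fun z => log (Gamma z) + log z) (digamma y + 1 / y) y := by
    simpa [one_div] using (hasDerivAt_log_Gamma hy).fun_add (hasDerivAt_log hy.ne')
  refine hshift.unique (hsplit.congr_of_eventuallyEq ?_)
  filter_upwards [Ioi_mem_nhds hy] with z hz
  rw [Gamma_add_one hz.ne', log_mul hz.ne' (Gamma_pos_of_pos hz).ne', add_comm]

lemma digamma_add_nat (hy : 0 < y) (n : ℕ) :
    digamma (y + n) = digamma y + ∑ k ∈ range n, 1 / (y + k) := by
  induction n with
  | zero => simp
  | succ n ih =>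
    rw [sum_range_succ, ← add_assoc, ← ih, Nat.cast_succ, ← add_assoc,
      digamma_add_one (by positivity)]

lemma digamma_one : digamma 1 = -γ := by
  rw [digamma, (hasDerivAt_Gamma_one.log (by simp)).deriv, Gamma_one, div_one]

lemma digamma_one_half : digamma (1 / 2) = -γ - 2 * log 2 := by
  rw [digamma, (hasDerivAt_Gamma_one_half.log (by rw [Gamma_one_half_eq]; positivity)).deriv,
    Gamma_one_half_eq]
  field_simp
  ring

lemma monotoneOn_digamma : MonotoneOn digamma (Ioi 0) :=
  convexOn_log_Gamma.monotoneOn_deriv fun _ hz => (hasDerivAt_log_Gamma hz).differentiableAt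

lemma tendsto_digamma_one_add_nat_sub_digamma_add_nat (hy : 0 < y) :
    Tendsto (fun n : ℕ => digamma (1 + n) - digamma (y + n)) atTop (𝓝 0) := by
  -- squeeze `ψ(y + n)` between `ψ(n)` and `ψ(1 + n + ⌈y⌉)`, both within `O(1/n)` of `ψ(1 + n)`
  set m := ⌈y⌉₊
  have hupper : ∀ n : ℕ, 1 ≤ n → digamma (1 + n) - digamma (y + n) ≤ 1 / n := by
    intro n hn
    have hn0 : (0 : ℝ) < n := by exact_mod_cast hn
    have hmono := monotoneOn_digamma (a := (n : ℝ)) (b := y + n) hn0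
      (by simp only [Set.mem_Ioi]; positivity) (by linarith)
    have hstep := digamma_add_one hn0
    rw [add_comm] at hstep
    linarith
  have hlower : ∀ n : ℕ, 1 ≤ n → -(m / n) ≤ digamma (1 + n) - digamma (y + n) := by
    intro n hn
    have hn0 : (0 : ℝ) < n := by exact_mod_cast hn
    have hmono := monotoneOn_digamma (a := y + n) (b := (1 + n) + m)
      (by simp only [Set.mem_Ioi]; positivity) (by simp only [Set.mem_Ioi]; positivity)
      (by linarith [Nat.le_ceil y])
    have hsum : ∑ k ∈ range m, 1 / ((1 + n : ℝ) + k) ≤ m / n :=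
      calc ∑ k ∈ range m, 1 / ((1 + n : ℝ) + k) ≤ ∑ _k ∈ range m, 1 / (n : ℝ) :=
            sum_le_sum fun k _ =>
              one_div_le_one_div_of_le hn0 (by linarith [k.cast_nonneg (α := ℝ)])
        _ = m / n := by simp [div_eq_mul_inv]
    rw [digamma_add_nat (y := 1 + n) (by positivity)] at hmono
    linarith
  refine tendsto_of_tendsto_of_tendsto_of_le_of_le' ?_ (tendsto_const_div_atTop_nhds_zero_nat 1)
    (eventually_atTop.2 ⟨1, hlower⟩) (eventually_atTop.2 ⟨1, hupper⟩)
  simpa using (tendsto_const_div_atTop_nhds_zero_nat (m : ℝ)).neg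

lemma summable_one_div_add_nat_sq (y : ℝ) : Summable fun k : ℕ => 1 / (y + k) ^ 2 := by
  refine ((summable_one_div_nat_add_rpow y 2).2 one_lt_two).congr fun k => ?_
  rw [rpow_two, sq_abs, add_comm]

lemma summable_digamma_series (hy : 0 < y) :
    Summable fun k : ℕ => 1 / (1 + k) - 1 / (y + k) := by
  have hbound : ∀ k : ℕ, ‖1 / (1 + k) - 1 / (y + k)‖ ≤
      |y - 1| * (1 / (1 + k) ^ 2 + 1 / (y + k) ^ 2) := by
    intro k
    have ha : (0 : ℝ) < 1 + k := by positivity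
    have hb : 0 < y + k := by positivity
    have hamgm : 1 / ((1 + k) * (y + k)) ≤ 1 / (1 + k) ^ 2 + 1 / (y + k) ^ 2 := by
      rw [div_add_div _ _ (by positivity) (by positivity),
        div_le_div_iff₀ (by positivity) (by positivity)]
      nlinarith [sq_nonneg ((1 + k : ℝ) - (y + k)), mul_pos ha hb]
    rw [div_sub_div _ _ ha.ne' hb.ne', Real.norm_eq_abs, abs_div, abs_of_pos (mul_pos ha hb),
      show 1 * (y + k) - (1 + k) * 1 = y - 1 by ring, div_eq_mul_one_div]
    exact mul_le_mul_of_nonneg_left hamgm (abs_nonneg _)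
  exact Summable.of_norm_bounded (((summable_one_div_add_nat_sq 1).add
    (summable_one_div_add_nat_sq y)).mul_left _) hbound

lemma hasSum_digamma (hy : 0 < y) :
    HasSum (fun k : ℕ => 1 / (1 + k) - 1 / (y + k)) (digamma y + γ) := by
  refine (summable_digamma_series hy).hasSum_iff_tendsto_nat.2 ?_
  have h := (tendsto_digamma_one_add_nat_sub_digamma_add_nat hy).const_add (digamma y + γ)
  rw [add_zero] at h
  refine h.congr fun n => ?_
  have hy_n := digamma_add_nat hy n
  have hone_n := digamma_add_nat one_pos n
  rw [digamma_one] at hone_n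
  rw [sum_sub_distrib]
  linarith

noncomputable def trigamma (y : ℝ) : ℝ := ∑' k : ℕ, 1 / (y + k) ^ 2

lemma hasDerivAt_digamma (hy : 0 < y) : HasDerivAt digamma (trigamma y) y := by
  have hy₀ : y ∈ Ioi (y / 2) := half_lt_self hy
  have hseries :
      HasDerivAt (fun z : ℝ => ∑' k : ℕ, (1 / (1 + (k : ℝ)) - 1 / (z + k))) (trigamma y) y := by
    refine hasDerivAt_tsum_of_isPreconnected
      (g := fun (k : ℕ) (z : ℝ) => 1 / (1 + (k : ℝ)) - 1 / (z + k))
      (g' := fun (k : ℕ) (z : ℝ) => 1 / (z + k) ^ 2) (summable_one_div_add_nat_sq (y / 2))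
      isOpen_Ioi isPreconnected_Ioi (fun k z hz => ?_) (fun k z hz => ?_) hy₀
      (summable_digamma_series hy) hy₀
    · have hz0 : z + k ≠ 0 := by linarith [k.cast_nonneg (α := ℝ), mem_Ioi.1 hz]
      simpa [one_div, pow_two, mul_inv, neg_div] using
        (((hasDerivAt_id z).add_const (k : ℝ)).inv hz0).const_sub (1 / (1 + k : ℝ))
    · have hz' : y / 2 + k ≤ z + k := by linarith [mem_Ioi.1 hz]
      rw [Real.norm_eq_abs, abs_of_nonneg (by positivity)]
      exact one_div_le_one_div_of_le (by positivity) (pow_le_pow_left₀ (by positivity) hz' 2)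
  refine (hseries.const_add (-γ)).congr_of_eventuallyEq ?_
  filter_upwards [Ioi_mem_nhds hy] with z hz
  linarith [(hasSum_digamma hz).tsum_eq]

end Digamma

lemma PsiF_zero : PsiF 0 = -(4 * log 2) := by
  norm_num [PsiF, digamma_one, digamma_one_half]
  ring

lemma hasDerivAt_PsiF {t : ℝ} (ht : t ∈ Ioo (-1 : ℝ) 1) :
    HasDerivAt PsiF (trigamma (1 - t) - trigamma (1 + t) - trigamma (1 / 2 - t / 2) / 2
      + trigamma (1 / 2 + t / 2) / 2) t := by
  obtain ⟨ht₁, ht₂⟩ := ht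
  have h₁ := (hasDerivAt_digamma (by linarith : 0 < 1 - t)).comp_const_sub 1 t
  have h₂ := (hasDerivAt_digamma (by linarith : 0 < 1 + t)).comp_const_add 1 t
  have h₃ := (hasDerivAt_digamma (by linarith : 0 < 1 / 2 - t / 2)).comp_const_sub (1 / 2) (t / 2)
    |>.comp t ((hasDerivAt_id t).div_const 2)
  have h₄ := (hasDerivAt_digamma (by linarith : 0 < 1 / 2 + t / 2)).comp_const_add (1 / 2) (t / 2)
    |>.comp t ((hasDerivAt_id t).div_const 2)
  exact (((h₁.fun_neg.fun_sub h₂).fun_add h₃).fun_add h₄).congr_deriv (by ring)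

noncomputable def invSqGap (t : ℝ) (k : ℕ) : ℝ := 1 / (1 - t + k) ^ 2 - 1 / (1 + t + k) ^ 2

lemma summable_invSqGap (t : ℝ) : Summable (invSqGap t) :=
  (summable_one_div_add_nat_sq _).sub (summable_one_div_add_nat_sq _)

lemma one_div_sq_sub_one_div_add_one_sq_le {u v : ℝ} (hu : 0 < u) (huv : u ≤ v) :
    1 / v ^ 2 - 1 / (v + 1) ^ 2 ≤ 1 / u ^ 2 - 1 / (u + 1) ^ 2 := by
  have hv : 0 < v := hu.trans_le huv
  rw [div_sub_div _ _ (by positivity) (by positivity),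
    div_sub_div _ _ (by positivity) (by positivity),
    div_le_div_iff₀ (by positivity) (by positivity)]
  have hfactor : (1 * (u + 1) ^ 2 - u ^ 2 * 1) * (v ^ 2 * (v + 1) ^ 2)
      - (1 * (v + 1) ^ 2 - v ^ 2 * 1) * (u ^ 2 * (u + 1) ^ 2)
      = (v - u) * ((2 * u + 1) * (u + v + 1) * (u * (u + 1) + v * (v + 1))
        - 2 * (u * (u + 1)) ^ 2) := by
    ring
  have hbracket :
      0 ≤ (2 * u + 1) * (u + v + 1) * (u * (u + 1) + v * (v + 1)) - 2 * (u * (u + 1)) ^ 2 := by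
    nlinarith [mul_pos hu hv, mul_le_mul_of_nonneg_left huv hu.le]
  nlinarith [mul_nonneg (sub_nonneg.2 huv) hbracket]

lemma antitone_invSqGap {t : ℝ} (ht₀ : 0 ≤ t) (ht₁ : t < 1) : Antitone (invSqGap t) := by
  refine antitone_nat_of_succ_le fun k => ?_
  have h := one_div_sq_sub_one_div_add_one_sq_le (u := 1 - t + k) (v := 1 + t + k)
    (by linarith [k.cast_nonneg (α := ℝ)]) (by linarith)
  simp only [invSqGap, Nat.cast_succ, ← add_assoc]
  linarith

lemma trigamma_combination_eq_neg_alternating (t : ℝ) :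
    trigamma (1 - t) - trigamma (1 + t) - trigamma (1 / 2 - t / 2) / 2
      + trigamma (1 / 2 + t / 2) / 2 = -∑' k : ℕ, (-1) ^ k * invSqGap t k := by
  have hs := summable_invSqGap t
  have heven : Summable fun k => invSqGap t (2 * k) :=
    hs.comp_injective (mul_right_injective₀ two_ne_zero)
  have hodd : Summable fun k => invSqGap t (2 * k + 1) :=
    hs.comp_injective ((add_left_injective 1).comp (mul_right_injective₀ two_ne_zero))
  have hwhole : trigamma (1 - t) - trigamma (1 + t) = ∑' k, invSqGap t k :=
    ((summable_one_div_add_nat_sq _).tsum_sub (summable_one_div_add_nat_sq _)).symm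
  have hhalf : trigamma (1 / 2 - t / 2) / 2 - trigamma (1 / 2 + t / 2) / 2
      = 2 * ∑' k, invSqGap t (2 * k) := by
    rw [trigamma, trigamma, ← tsum_div_const, ← tsum_div_const,
      ← (((summable_one_div_add_nat_sq _).div_const 2).tsum_sub
        ((summable_one_div_add_nat_sq _).div_const 2)), ← tsum_mul_left]
    refine tsum_congr fun k => ?_
    rw [invSqGap, show (1 / 2 - t / 2 + k : ℝ) = (1 - t + (2 * k : ℕ)) / 2 by push_cast; ring,
      show (1 / 2 + t / 2 + k : ℝ) = (1 + t + (2 * k : ℕ)) / 2 by push_cast; ring,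
      div_pow, div_pow, one_div_div, one_div_div]
    ring
  have halt : ∑' k : ℕ, (-1) ^ k * invSqGap t k
      = ∑' k, invSqGap t (2 * k) - ∑' k, invSqGap t (2 * k + 1) := by
    rw [← tsum_even_add_odd (by simpa [pow_mul] using heven)
      (by simpa [pow_succ, pow_mul] using hodd.neg)]
    simp [pow_succ, pow_mul, tsum_neg, sub_eq_add_neg]
  rw [← tsum_even_add_odd heven hodd] at hwhole
  linarith

lemma deriv_PsiF_mem_Icc {t : ℝ} (ht₀ : 0 ≤ t) (ht₁ : t < 1) :
    deriv PsiF t ∈ Icc (-invSqGap t 0) 0 := by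
  have hsum := ((summable_invSqGap t).alternating).hasSum.tendsto_sum_nat
  have hanti := antitone_invSqGap ht₀ ht₁
  have hupper := hanti.tendsto_le_alternating_series hsum 0
  have hlower := hanti.alternating_series_le_tendsto hsum 0
  rw [(hasDerivAt_PsiF ⟨by linarith, ht₁⟩).deriv, trigamma_combination_eq_neg_alternating]
  simp only [mul_zero, zero_add, range_one, sum_singleton, pow_zero, one_mul, range_zero,
    sum_empty] at hupper hlower
  constructor <;> linarith

noncomputable def logF (v : ℝ) : ℝ :=
  2 * log (Gamma (1 / 2 + v / 2)) - 2 * log (Gamma (1 / 2 - v / 2)) + log (Gamma (1 - v))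
    - log (Gamma (1 + v))

section F

variable {v : ℝ}

lemma F_eq_exp_logF (hv : v ∈ Ioo (-1 : ℝ) 1) : F v = exp (logF v) := by
  obtain ⟨hv₁, hv₂⟩ := hv
  have h₁ := Gamma_pos_of_pos (by linarith : 0 < 1 / 2 + v / 2)
  have h₂ := Gamma_pos_of_pos (by linarith : 0 < 1 / 2 - v / 2)
  have h₃ := Gamma_pos_of_pos (by linarith : 0 < 1 - v)
  have h₄ := Gamma_pos_of_pos (by linarith : 0 < 1 + v)
  rw [logF, exp_sub, exp_add, exp_sub, exp_log h₃, exp_log h₄, ← log_rpow h₁, ← log_rpow h₂,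
    exp_log (by positivity), exp_log (by positivity), F, div_pow]
  norm_cast
  ring

lemma hasDerivAt_logF (hv : v ∈ Ioo (-1 : ℝ) 1) : HasDerivAt logF (PsiF v) v := by
  obtain ⟨hv₁, hv₂⟩ := hv
  have h₁ :=
    (hasDerivAt_log_Gamma (by linarith : 0 < 1 / 2 + v / 2)).comp_const_add (1 / 2) (v / 2)
      |>.comp v ((hasDerivAt_id v).div_const 2)
  have h₂ :=
    (hasDerivAt_log_Gamma (by linarith : 0 < 1 / 2 - v / 2)).comp_const_sub (1 / 2) (v / 2)
      |>.comp v ((hasDerivAt_id v).div_const 2)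
  have h₃ := (hasDerivAt_log_Gamma (by linarith : 0 < 1 - v)).comp_const_sub 1 v
  have h₄ := (hasDerivAt_log_Gamma (by linarith : 0 < 1 + v)).comp_const_add 1 v
  exact ((((h₁.const_mul 2).fun_sub (h₂.const_mul 2)).fun_add h₃).fun_sub h₄).congr_deriv
    (by rw [PsiF]; ring)

lemma hasDerivAt_F (hv : v ∈ Ioo (-1 : ℝ) 1) : HasDerivAt F (F v * PsiF v) v := by
  have h := (hasDerivAt_logF hv).exp
  rw [← F_eq_exp_logF hv] at h
  refine h.congr_of_eventuallyEq ?_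
  filter_upwards [Ioo_mem_nhds hv.1 hv.2] with w hw
  exact F_eq_exp_logF hw

lemma iteratedDeriv_two_F (hv : v ∈ Ioo (-1 : ℝ) 1) :
    iteratedDeriv 2 F v = F v * (PsiF v ^ 2 + deriv PsiF v) := by
  have hderiv : deriv F =ᶠ[𝓝 v] fun w => F w * PsiF w := by
    filter_upwards [Ioo_mem_nhds hv.1 hv.2] with w hw
    exact (hasDerivAt_F hw).deriv
  rw [iteratedDeriv_succ, iteratedDeriv_one, hderiv.deriv_eq,
    ((hasDerivAt_F hv).fun_mul (hasDerivAt_PsiF hv).differentiableAt.hasDerivAt).deriv]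
  ring

end F

lemma mul_sub_le_sub_of_hasDerivAt {f f' : ℝ → ℝ} {a b C : ℝ} (hab : a ≤ b)
    (hf : ∀ t ∈ Icc a b, HasDerivAt f (f' t) t) (hC : ∀ t ∈ Icc a b, C ≤ f' t) :
    C * (b - a) ≤ f b - f a :=
  (convex_Icc a b).mul_sub_le_image_sub_of_le_deriv
    (fun t ht => (hf t ht).continuousAt.continuousWithinAt)
    (fun t ht => (hf t (interior_subset ht)).differentiableAt.differentiableWithinAt)
    (fun t ht => (hf t (interior_subset ht)).deriv ▸ hC t (interior_subset ht))
    a (left_mem_Icc.2 hab) b (right_mem_Icc.2 hab) hab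

section Bounds

variable {x : ℝ}

lemma invSqGap_zero_le (hx : x ∈ Icc (0 : ℝ) (1 / 19)) : invSqGap x 0 ≤ 0.22 := by
  obtain ⟨hx₀, hx₁⟩ := hx
  have h₁ : 1 / (1 - x) ^ 2 ≤ 1 / (18 / 19) ^ 2 :=
    one_div_le_one_div_of_le (by norm_num) (pow_le_pow_left₀ (by norm_num) (by linarith) 2)
  have h₂ : 1 / (20 / 19) ^ 2 ≤ 1 / (1 + x) ^ 2 :=
    one_div_le_one_div_of_le (by positivity) (pow_le_pow_left₀ (by linarith) (by linarith) 2)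
  simp only [invSqGap, CharP.cast_eq_zero, add_zero]
  norm_num at h₁ h₂ ⊢
  linarith

lemma deriv_PsiF_mem_Icc_of_mem (hx : x ∈ Icc (0 : ℝ) (1 / 19)) :
    deriv PsiF x ∈ Icc (-0.22 : ℝ) 0 := by
  obtain ⟨hlower, hupper⟩ := deriv_PsiF_mem_Icc hx.1 (by linarith [hx.2])
  exact ⟨by linarith [invSqGap_zero_le hx], hupper⟩

lemma PsiF_mem_Icc (hx : x ∈ Icc (0 : ℝ) (1 / 19)) :
    PsiF x ∈ Icc (-2.8 : ℝ) (-(4 * log 2)) := by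
  have hderiv : ∀ t ∈ Icc 0 x, HasDerivAt PsiF (deriv PsiF t) t := fun t ht =>
    (hasDerivAt_PsiF ⟨by linarith [ht.1], by linarith [ht.2, hx.2]⟩).differentiableAt.hasDerivAt
  have hmem : ∀ t ∈ Icc 0 x, t ∈ Icc (0 : ℝ) (1 / 19) := fun t ht => ⟨ht.1, ht.2.trans hx.2⟩
  have hlower := mul_sub_le_sub_of_hasDerivAt hx.1 hderiv
    fun t ht => (deriv_PsiF_mem_Icc_of_mem (hmem t ht)).1
  have hupper := mul_sub_le_sub_of_hasDerivAt (f := fun t => -PsiF t) hx.1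
    (fun t ht => (hderiv t ht).neg)
    fun t ht => neg_nonneg.2 (deriv_PsiF_mem_Icc_of_mem (hmem t ht)).2
  rw [PsiF_zero] at hlower hupper
  have := Real.log_two_lt_d9
  constructor <;> nlinarith [hx.1, hx.2]

lemma le_F (hx : x ∈ Icc (0 : ℝ) (1 / 19)) : 0.86 ≤ F x := by
  have hlog := mul_sub_le_sub_of_hasDerivAt hx.1
    (fun t ht => hasDerivAt_logF ⟨by linarith [ht.1], by linarith [ht.2, hx.2]⟩)
    fun t ht => (PsiF_mem_Icc ⟨ht.1, ht.2.trans hx.2⟩).1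
  have hlogF0 : logF 0 = 0 := by norm_num [logF]
  rw [F_eq_exp_logF ⟨by linarith [hx.1], by linarith [hx.2]⟩]
  calc (0.86 : ℝ) ≤ (1 - 2.8 / 19 / 4) ^ 4 := by norm_num
    _ ≤ exp (-(2.8 / 19)) := one_sub_div_pow_le_exp_neg (by norm_num)
    _ ≤ exp (logF x) := exp_le_exp.2 (by nlinarith [hx.2])

end Bounds

theorem F_second_deriv_pos :
    ∀ x ∈ Set.Icc (0 : ℝ) (2 / 38),
      iteratedDeriv 2 F x = F x * ((PsiF x) ^ 2 + deriv PsiF x) ∧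
        0 < iteratedDeriv 2 F x ∧ (6.4 : ℝ) ≤ iteratedDeriv 2 F x := by
  intro x hx
  have hx' : x ∈ Icc (0 : ℝ) (1 / 19) := by norm_num at hx ⊢; exact hx
  have hform := iteratedDeriv_two_F ⟨by linarith [hx'.1], by linarith [hx'.2]⟩
  have hPsi : PsiF x ≤ -2.77 := by linarith [(PsiF_mem_Icc hx').2, Real.log_two_gt_d9]
  have hsum : 7.45 ≤ PsiF x ^ 2 + deriv PsiF x := by
    nlinarith [(deriv_PsiF_mem_Icc_of_mem hx').1]
  have hbound : 6.4 ≤ F x * (PsiF x ^ 2 + deriv PsiF x) :=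
    calc (6.4 : ℝ) ≤ 0.86 * 7.45 := by norm_num
      _ ≤ _ := mul_le_mul (le_F hx') hsum (by norm_num) (by linarith [le_F hx'])
  exact ⟨hform, by linarith, by linarith⟩
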